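/- Let A be a p×K real matrix with nonnegative entries such that every row a_i of A is nonzero, let V be a K×K real matrix with columns V_1, …, V_K where V_1 has all positive entries, and set Ξ = A·V with first column ξ_1 = A·V_1 (which has all positive entries). Define the rows r_i ∈ ℝ^{K−1} of R by r_i(k) = ξ_{k+1}(i)/ξ_1(i), the rows v_1*, …, v_K* ∈ ℝ^{K−1} of V* by v_j*(k) = V_{k+1}(j)/V_1(j), and π_i ∈ ℝ^K as the i-th row of Π = [diag(ξ_1)]^{-1}·A·diag(V_1). Then for every i, π_i is a weight vector and r_i = Σ_{j=1}^K π_i(j)·v_j*; in particular, every r_i lies in the convex hull of {v_1*, …, v_K*}. -/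

import Mathlib

open Matrix BigOperators

/-!
Row `i` of `Ξ = A V` is the vector of `A`-weighted sums `ξₖ(i) = ∑ⱼ A i j V j k`, so
`ξₖ₊₁(i) / ξ₁(i) = ∑ⱼ (A i j V j 1 / ξ₁(i)) · (V j (k+1) / V j 1)`: a ratio of two weighted sums is
the average of the ratios of their terms, weighted by the terms of the denominator. These weights
are the entries of `πᵢ`; they are nonnegative because `A ≥ 0` and `V₁ > 0`, and their sum is
`ξ₁(i) / ξ₁(i) = 1`, where `ξ₁(i) > 0` since the row `aᵢ` is nonzero.
-/

theorem Matrix.inv_diagonal_of_ne_zero {n 𝕜 : Type*} [Fintype n] [DecidableEq n] [Field 𝕜]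
    {d : n → 𝕜} (hd : ∀ i, d i ≠ 0) : (diagonal d)⁻¹ = diagonal fun i => (d i)⁻¹ :=
  inv_eq_right_inv <| by
    rw [diagonal_mul_diagonal, ← diagonal_one]
    exact congrArg diagonal (funext fun i => mul_inv_cancel₀ (hd i))

theorem Matrix.inv_diagonal_mul_mul_diagonal_apply {m n 𝕜 : Type*} [Fintype m] [DecidableEq m]
    [Fintype n] [DecidableEq n] [Field 𝕜] {d : m → 𝕜} (hd : ∀ i, d i ≠ 0) (M : Matrix m n 𝕜)
    (e : n → 𝕜) (i : m) (j : n) : ((diagonal d)⁻¹ * M * diagonal e) i j = M i j * e j / d i := by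
  rw [inv_diagonal_of_ne_zero hd, mul_diagonal, diagonal_mul]
  ring

section WeightedRatios

variable {ι 𝕜 : Type*} [Fintype ι]

theorem dotProduct_pos_of_nonneg_of_ne_zero [Field 𝕜] [LinearOrder 𝕜] [IsStrictOrderedRing 𝕜]
    {a v : ι → 𝕜} (ha : 0 ≤ a) (ha0 : a ≠ 0) (hv : ∀ j, 0 < v j) : 0 < a ⬝ᵥ v := by
  obtain ⟨j, hj⟩ := Function.ne_iff.mp ha0
  exact Finset.sum_pos' (fun k _ => mul_nonneg (ha k) (hv k).le)
    ⟨j, Finset.mem_univ j, mul_pos ((ha j).lt_of_ne' hj) (hv j)⟩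

variable [Field 𝕜] {a v : ι → 𝕜}

theorem sum_mul_div_dotProduct_eq_one (h : a ⬝ᵥ v ≠ 0) : ∑ j, a j * v j / (a ⬝ᵥ v) = 1 := by
  rw [← Finset.sum_div, ← dotProduct, div_self h]

theorem sum_mul_div_dotProduct_mul_div (hv : ∀ j, v j ≠ 0) (u : ι → 𝕜) :
    ∑ j, a j * v j / (a ⬝ᵥ v) * (u j / v j) = a ⬝ᵥ u / (a ⬝ᵥ v) := by
  conv_rhs => rw [dotProduct, Finset.sum_div]
  refine Finset.sum_congr rfl fun j _ => ?_
  field_simp [hv j]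

end WeightedRatios

/-- convex-combination part of Lemma 2: each row r_i of the ratio matrix R
is the convex combination of the rows v_j* of V* with weight vector π_i, the i-th row of
Π = diag(ξ₁)⁻¹·A·diag(V₁); in particular, each r_i lies in the convex hull of the rows of V*.
(The number of topics is written K+1 so that the first column always exists.) -/
theorem rows_of_R_are_convex_combinations
    (p K : ℕ) (A : Matrix (Fin p) (Fin (K + 1)) ℝ)
    (hA : ∀ i j, 0 ≤ A i j) (hrow : ∀ i, A i ≠ 0)
    (V : Matrix (Fin (K + 1)) (Fin (K + 1)) ℝ) (hV1 : ∀ j, 0 < V j 0)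
    (Ξ : Matrix (Fin p) (Fin (K + 1)) ℝ) (hΞ : Ξ = A * V)
    (r : Fin p → Fin K → ℝ) (hr : ∀ i k, r i k = Ξ i k.succ / Ξ i 0)
    (vstar : Fin (K + 1) → Fin K → ℝ)
    (hvs : ∀ j k, vstar j k = V j k.succ / V j 0)
    (Pmat : Matrix (Fin p) (Fin (K + 1)) ℝ)
    (hP : Pmat = (Matrix.diagonal fun i => Ξ i 0)⁻¹ * A * Matrix.diagonal fun j => V j 0) :
    ∀ i : Fin p,
      ((∀ j, 0 ≤ Pmat i j) ∧ (∑ j, Pmat i j = 1)) ∧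
      (r i = ∑ j, Pmat i j • vstar j) ∧
      r i ∈ convexHull ℝ (Set.range vstar) := by
  have hΞ_apply : ∀ i k, Ξ i k = A i ⬝ᵥ fun j => V j k := fun i k => by rw [hΞ, mul_apply']
  have hξ : ∀ i, 0 < Ξ i 0 := fun i => by
    rw [hΞ_apply]
    exact dotProduct_pos_of_nonneg_of_ne_zero (hA i) (hrow i) hV1
  have hπ : ∀ i j, Pmat i j = A i j * V j 0 / Ξ i 0 := fun i j => by
    rw [hP, inv_diagonal_mul_mul_diagonal_apply fun i => (hξ i).ne']
  intro i
  have hnonneg : ∀ j, 0 ≤ Pmat i j := fun j => by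
    rw [hπ]
    exact div_nonneg (mul_nonneg (hA i j) (hV1 j).le) (hξ i).le
  have hsum : ∑ j, Pmat i j = 1 := by
    simp only [hπ, hΞ_apply i 0]
    exact sum_mul_div_dotProduct_eq_one (by rw [← hΞ_apply]; exact (hξ i).ne')
  have hcomb : r i = ∑ j, Pmat i j • vstar j := funext fun k => by
    simp only [Finset.sum_apply, Pi.smul_apply, smul_eq_mul, hπ, hvs, hr, hΞ_apply]
    exact (sum_mul_div_dotProduct_mul_div (fun j => (hV1 j).ne') _).symm
  refine ⟨⟨hnonneg, hsum⟩, hcomb, ?_⟩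
  rw [hcomb]
  exact (convex_convexHull ℝ _).sum_mem (fun j _ => hnonneg j) hsum
    fun j _ => subset_convexHull ℝ _ (Set.mem_range_self j)
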